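/- Full layered decomposition of the Haar matrix (Proposition 5): for N = 2^L with L ≥ 1, W_N = P_L·D_L·⋯·P_1·D_1·P_0, where P_0 = P̃_{2^L}^T, P_ℓ = diag( diag(P̃_{2^{L−ℓ}}^T, I_{2^{L−ℓ}}) · P̃_{2^{L−ℓ+1}}, I_{2^L − 2^{L−ℓ+1}} ) for ℓ = 1,…,L−1, P_L = I_{2^L}, and D_ℓ = diag( I_{2^{L−ℓ}} ⊗ W_2, I_{2^L − 2^{L−ℓ+1}} ) for ℓ = 1,…,L. All the P_ℓ are permutation matrices and each D_ℓ is block diagonal with 2^{L−ℓ} copies of the 2×2 block W_2 followed by 2^L − 2^{L−ℓ+1} ones on the diagonal. -/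

import Mathlib

open Matrix Complex

/-- Cast a square matrix along an equality of sizes. -/
noncomputable def castM {m n : ℕ} (h : m = n) (A : Matrix (Fin m) (Fin m) ℂ) :
    Matrix (Fin n) (Fin n) ℂ :=
  Matrix.reindex (finCongr h) (finCongr h) A

/-- Block diagonal matrix `diag(A, B)`. -/
noncomputable def blockDiag2 {m n : ℕ} (A : Matrix (Fin m) (Fin m) ℂ)
    (B : Matrix (Fin n) (Fin n) ℂ) : Matrix (Fin (m + n)) (Fin (m + n)) ℂ :=
  Matrix.reindex finSumFinEquiv finSumFinEquiv (Matrix.fromBlocks A 0 0 B)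

/-- 2×2 block matrix `[[A, B],[C, D]]` with m×m blocks, as an `(m+m)×(m+m)` matrix. -/
noncomputable def fromBlocks2 {m : ℕ} (A B C D : Matrix (Fin m) (Fin m) ℂ) :
    Matrix (Fin (m + m)) (Fin (m + m)) ℂ :=
  Matrix.reindex finSumFinEquiv finSumFinEquiv (Matrix.fromBlocks A B C D)

/-- Kronecker product of two square matrices, with row-major flattened indices. -/
noncomputable def kronF {m n : ℕ} (A : Matrix (Fin m) (Fin m) ℂ)
    (B : Matrix (Fin n) (Fin n) ℂ) : Matrix (Fin (m * n)) (Fin (m * n)) ℂ :=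
  Matrix.reindex finProdFinEquiv finProdFinEquiv (Matrix.kroneckerMap (· * ·) A B)

/-- The odd-even permutation matrix `P̃_N` (0-based indices):
`[P̃_N]_{i,k} = 1` iff (`2i < N` and `k = 2i`) or (`2i ≥ N` and `k = 2i+1−N`). -/
noncomputable def oddEvenPerm (N : ℕ) : Matrix (Fin N) (Fin N) ℂ :=
  Matrix.of fun i k =>
    if (2 * i.val < N ∧ k.val = 2 * i.val) ∨ (N ≤ 2 * i.val ∧ k.val = 2 * i.val + 1 - N)
    then 1 else 0

/-- The base 2×2 Haar matrix `W_2 = (1/√2)·[[1,1],[1,−1]]`. -/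
noncomputable def W2 : Matrix (Fin 2) (Fin 2) ℂ :=
  (1 / (Real.sqrt 2 : ℂ)) • !![1, 1; 1, -1]

/-- The Haar matrices: `W_1 = 1` and
`W_{2^{L+1}} = (1/√2)·[[W_{2^L}, W_{2^L}],[I, −I]]`. -/
noncomputable def haarMat : (L : ℕ) → Matrix (Fin (2 ^ L)) (Fin (2 ^ L)) ℂ
  | 0 => 1
  | L + 1 =>
      castM (by ring)
        ((1 / (Real.sqrt 2 : ℂ)) • fromBlocks2 (haarMat L) (haarMat L) 1 (-1))

/-- A matrix is a permutation matrix if it is the 0/1 matrix of some permutation. -/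
def IsPermutationMatrix {n : ℕ} (A : Matrix (Fin n) (Fin n) ℂ) : Prop :=
  ∃ σ : Equiv.Perm (Fin n), ∀ i k, A i k = if σ i = k then 1 else 0

/-- The permutation matrices `P_ℓ` of Proposition 5: `P_0 = P̃_{2^L}ᵀ`,
`P_ℓ = diag( diag(P̃_{2^{L−ℓ}}ᵀ, I_{2^{L−ℓ}}) · P̃_{2^{L−ℓ+1}}, I_{2^L − 2^{L−ℓ+1}} )`
for `1 ≤ ℓ ≤ L−1`, and `P_L = I_{2^L}`. -/
noncomputable def haarP (L ℓ : ℕ) : Matrix (Fin (2 ^ L)) (Fin (2 ^ L)) ℂ :=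
  if h0 : ℓ = 0 then (oddEvenPerm (2 ^ L))ᵀ
  else if h : ℓ < L then
    castM
      (Nat.add_sub_cancel' (Nat.pow_le_pow_right (by norm_num)
        (show L - ℓ + 1 ≤ L by omega)))
      (blockDiag2
        (castM (show 2 ^ (L - ℓ) + 2 ^ (L - ℓ) = 2 ^ (L - ℓ + 1) by ring)
            (blockDiag2 ((oddEvenPerm (2 ^ (L - ℓ)))ᵀ)
              (1 : Matrix (Fin (2 ^ (L - ℓ))) (Fin (2 ^ (L - ℓ))) ℂ))
          * oddEvenPerm (2 ^ (L - ℓ + 1)))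
        (1 : Matrix (Fin (2 ^ L - 2 ^ (L - ℓ + 1))) (Fin (2 ^ L - 2 ^ (L - ℓ + 1))) ℂ))
  else 1

/-- The block diagonal matrices `D_ℓ = diag(I_{2^{L−ℓ}} ⊗ W_2, I_{2^L − 2^{L−ℓ+1}})`
of Proposition 5 (for `1 ≤ ℓ ≤ L`). -/
noncomputable def haarD (L ℓ : ℕ) : Matrix (Fin (2 ^ L)) (Fin (2 ^ L)) ℂ :=
  if h : 1 ≤ ℓ ∧ ℓ ≤ L then
    castM
      (by
        have h2 : (2 : ℕ) ^ (L - ℓ + 1) ≤ 2 ^ L :=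
          Nat.pow_le_pow_right (by norm_num) (by omega)
        rw [← pow_succ]
        exact Nat.add_sub_cancel' h2)
      (blockDiag2 (kronF (1 : Matrix (Fin (2 ^ (L - ℓ))) (Fin (2 ^ (L - ℓ))) ℂ) W2)
        (1 : Matrix (Fin (2 ^ L - 2 ^ (L - ℓ + 1))) (Fin (2 ^ L - 2 ^ (L - ℓ + 1))) ℂ))
  else 1


/-!
Write `N = 2^L`. The recursion `W_{2N} = (1/√2)[[W_N, W_N], [I, -I]]` factors as
`diag(W_N, I) · (1/√2)[[I, I], [I, -I]]`, and the second factor is the conjugate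
`P̃_{2N} (I_N ⊗ W_2) P̃_{2N}ᵀ` of the first layer: the odd-even permutation is the composite
`Fin (N + N) ≃ Fin N ⊕ Fin N ≃ Fin N × Fin 2 ≃ Fin (2N)`, under which `I_N ⊗ W_2` becomes
a 2×2 block matrix. Inserting `P̃_N P̃_Nᵀ = I` gives
`W_{2N} P̃_{2N} = diag(W_N P̃_N, I) · P_1 D_1` at size `2N`, while the layers
`P_{ℓ+1}, D_{ℓ+1}` at size `2N` are those `P_ℓ, D_ℓ` at size `N` padded by an identity block.
By induction `W_N P̃_N` is the product of the layers, and `P_0 = P̃_Nᵀ` gives the decomposition.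
-/

section Blocks

variable {m n : ℕ}

@[simp] lemma castM_apply (h : m = n) (A : Matrix (Fin m) (Fin m) ℂ) (i j : Fin n) :
    castM h A i j = A (Fin.cast h.symm i) (Fin.cast h.symm j) := rfl

lemma castM_mul (h : m = n) (A B : Matrix (Fin m) (Fin m) ℂ) :
    castM h (A * B) = castM h A * castM h B := by
  simp only [castM, reindex_apply, submatrix_mul_equiv]

@[simp] lemma castM_one (h : m = n) : castM h (1 : Matrix (Fin m) (Fin m) ℂ) = 1 :=
  submatrix_one_equiv _

lemma blockDiag2_apply (A : Matrix (Fin m) (Fin m) ℂ) (B : Matrix (Fin n) (Fin n) ℂ)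
    (i j : Fin (m + n)) :
    blockDiag2 A B i j =
      if hi : (i : ℕ) < m then
        if hj : (j : ℕ) < m then A ⟨i, hi⟩ ⟨j, hj⟩ else 0
      else
        if hj : (j : ℕ) < m then 0 else B ⟨i - m, by omega⟩ ⟨j - m, by omega⟩ := by
  induction i using Fin.addCases <;> induction j using Fin.addCases <;>
    simp [blockDiag2]

lemma blockDiag2_mul (A A' : Matrix (Fin m) (Fin m) ℂ) (B B' : Matrix (Fin n) (Fin n) ℂ) :
    blockDiag2 A B * blockDiag2 A' B' = blockDiag2 (A * A') (B * B') := by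
  simp only [blockDiag2, reindex_apply, submatrix_mul_equiv, fromBlocks_multiply]
  simp

@[simp] lemma blockDiag2_one :
    blockDiag2 (1 : Matrix (Fin m) (Fin m) ℂ) (1 : Matrix (Fin n) (Fin n) ℂ) = 1 := by
  simp only [blockDiag2, fromBlocks_one, reindex_apply, submatrix_one_equiv]

lemma fromBlocks2_self_one_neg_one (A : Matrix (Fin m) (Fin m) ℂ) :
    fromBlocks2 A A 1 (-1) = blockDiag2 A 1 * fromBlocks2 1 1 1 (-1) := by
  simp only [blockDiag2, fromBlocks2, reindex_apply, submatrix_mul_equiv, fromBlocks_multiply]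
  simp

end Blocks

section Padding

variable {m n p k : ℕ}

noncomputable def padOne (h : m ≤ n) :
    Matrix (Fin m) (Fin m) ℂ →* Matrix (Fin n) (Fin n) ℂ where
  toFun A := castM (Nat.add_sub_cancel' h) (blockDiag2 A 1)
  map_one' := by simp
  map_mul' A B := by rw [← castM_mul, blockDiag2_mul, one_mul]

lemma padOne_apply (h : m ≤ n) (A : Matrix (Fin m) (Fin m) ℂ) (i j : Fin n) :
    padOne h A i j =
      if hi : (i : ℕ) < m then
        if hj : (j : ℕ) < m then A ⟨i, hi⟩ ⟨j, hj⟩ else 0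
      else if (i : ℕ) = j then 1 else 0 := by
  simp only [padOne, MonoidHom.coe_mk, OneHom.coe_mk, castM_apply, blockDiag2_apply, one_apply,
    Fin.ext_iff, Fin.val_cast]
  split_ifs <;> first | rfl | omega

lemma padOne_self (h : n ≤ n) (A : Matrix (Fin n) (Fin n) ℂ) : padOne h A = A := by
  ext i j
  simp [padOne_apply]

lemma padOne_padOne (h : m ≤ n) (h' : n ≤ p) (A : Matrix (Fin m) (Fin m) ℂ) :
    padOne h' (padOne h A) = padOne (h.trans h') A := by
  ext i j
  simp only [padOne_apply]
  split_ifs <;> first | rfl | omega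

lemma padOne_eq_castM_blockDiag2 (h : m ≤ n) (e : m + k = n) (A : Matrix (Fin m) (Fin m) ℂ) :
    padOne h A = castM e (blockDiag2 A 1) := by
  ext i j
  simp only [padOne_apply, castM_apply, blockDiag2_apply, one_apply, Fin.ext_iff, Fin.val_cast]
  split_ifs <;> first | rfl | omega

end Padding

section Permutation

variable {α β R : Type*} [DecidableEq α] [DecidableEq β] [Zero R] [One R]

lemma reindex_permMatrix (e : α ≃ β) (σ : Equiv.Perm α) :
    reindex e e (σ.permMatrix R) = (e.permCongr σ).permMatrix R := by
  ext i j
  simp [PEquiv.toMatrix_apply, Equiv.permCongr_apply, Equiv.eq_symm_apply]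

lemma fromBlocks_permMatrix (σ : Equiv.Perm α) (τ : Equiv.Perm β) :
    fromBlocks (σ.permMatrix R) 0 0 (τ.permMatrix R) = (σ.sumCongr τ).permMatrix R := by
  ext (i | i) (j | j) <;> simp [PEquiv.toMatrix_apply]

end Permutation

section PermutationMatrix

variable {m n : ℕ} {A B : Matrix (Fin n) (Fin n) ℂ}

lemma isPermutationMatrix_iff :
    IsPermutationMatrix A ↔ ∃ σ : Equiv.Perm (Fin n), σ.permMatrix ℂ = A := by
  simp only [IsPermutationMatrix, ← Matrix.ext_iff, PEquiv.toMatrix_apply, Equiv.toPEquiv_apply,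
    Option.mem_def, Option.some_inj, eq_comm (a := A _ _)]

namespace IsPermutationMatrix

lemma one : IsPermutationMatrix (1 : Matrix (Fin n) (Fin n) ℂ) :=
  isPermutationMatrix_iff.2 ⟨1, permMatrix_one⟩

lemma mul (hA : IsPermutationMatrix A) (hB : IsPermutationMatrix B) :
    IsPermutationMatrix (A * B) := by
  obtain ⟨σ, rfl⟩ := isPermutationMatrix_iff.1 hA
  obtain ⟨τ, rfl⟩ := isPermutationMatrix_iff.1 hB
  exact isPermutationMatrix_iff.2 ⟨τ * σ, permMatrix_mul τ σ⟩

lemma transpose (hA : IsPermutationMatrix A) : IsPermutationMatrix Aᵀ := by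
  obtain ⟨σ, rfl⟩ := isPermutationMatrix_iff.1 hA
  exact isPermutationMatrix_iff.2 ⟨σ⁻¹, (transpose_permMatrix σ).symm⟩

lemma mul_transpose_self (hA : IsPermutationMatrix A) : A * Aᵀ = 1 := by
  obtain ⟨σ, rfl⟩ := isPermutationMatrix_iff.1 hA
  rw [transpose_permMatrix, ← permMatrix_mul, inv_mul_cancel, permMatrix_one]

lemma transpose_mul_self (hA : IsPermutationMatrix A) : Aᵀ * A = 1 := by
  obtain ⟨σ, rfl⟩ := isPermutationMatrix_iff.1 hA
  rw [transpose_permMatrix, ← permMatrix_mul, mul_inv_cancel, permMatrix_one]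

lemma castM (hA : IsPermutationMatrix A) (h : n = m) : IsPermutationMatrix (castM h A) := by
  obtain ⟨σ, rfl⟩ := isPermutationMatrix_iff.1 hA
  exact isPermutationMatrix_iff.2 ⟨_, (reindex_permMatrix _ σ).symm⟩

lemma blockDiag2 {C : Matrix (Fin m) (Fin m) ℂ} (hA : IsPermutationMatrix A)
    (hC : IsPermutationMatrix C) : IsPermutationMatrix (blockDiag2 A C) := by
  obtain ⟨σ, rfl⟩ := isPermutationMatrix_iff.1 hA
  obtain ⟨τ, rfl⟩ := isPermutationMatrix_iff.1 hC
  rw [_root_.blockDiag2, fromBlocks_permMatrix, reindex_permMatrix]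
  exact isPermutationMatrix_iff.2 ⟨_, rfl⟩

lemma padOne (hA : IsPermutationMatrix A) (h : n ≤ m) : IsPermutationMatrix (padOne h A) :=
  (hA.blockDiag2 one).castM _

end IsPermutationMatrix

end PermutationMatrix

section OddEven

def sumSelfEquivProdFinTwo (α : Type*) : α ⊕ α ≃ α × Fin 2 where
  toFun := Sum.elim (fun a => (a, 0)) (fun a => (a, 1))
  invFun p := if p.2 = 0 then .inl p.1 else .inr p.1
  left_inv x := by cases x <;> simp
  right_inv := by
    rintro ⟨a, b⟩
    fin_cases b <;> simp

@[simp] lemma sumSelfEquivProdFinTwo_inl {α : Type*} (a : α) :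
    sumSelfEquivProdFinTwo α (.inl a) = (a, 0) := rfl

@[simp] lemma sumSelfEquivProdFinTwo_inr {α : Type*} (a : α) :
    sumSelfEquivProdFinTwo α (.inr a) = (a, 1) := rfl

def oddEvenEquiv (M : ℕ) : Equiv.Perm (Fin (M * 2)) :=
  (finCongr (by omega)).trans <|
    finSumFinEquiv.symm.trans <| (sumSelfEquivProdFinTwo (Fin M)).trans finProdFinEquiv

lemma oddEvenEquiv_apply_val (M : ℕ) (i : Fin (M * 2)) :
    (oddEvenEquiv M i : ℕ) = if (i : ℕ) < M then 2 * (i : ℕ) else 2 * ((i : ℕ) - M) + 1 := by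
  simp only [oddEvenEquiv, Equiv.trans_apply, finCongr_apply]
  rcases h : finSumFinEquiv.symm (Fin.cast (show M * 2 = M + M by omega) i) with a | a <;>
    rw [Equiv.symm_apply_eq, Fin.ext_iff] at h <;>
    simp [finProdFinEquiv_apply_val] at h ⊢ <;> split_ifs <;> omega

lemma oddEvenPerm_eq_permMatrix (M : ℕ) :
    oddEvenPerm (M * 2) = (oddEvenEquiv M).permMatrix ℂ := by
  ext i j
  simp only [oddEvenPerm, of_apply, PEquiv.toMatrix_apply, Equiv.toPEquiv_apply, Option.mem_def,
    Option.some_inj, Fin.ext_iff, oddEvenEquiv_apply_val]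
  have := i.isLt
  congr 1
  apply propext
  split_ifs <;> omega

lemma oddEvenPerm_eq_one {N : ℕ} (hN : N ≤ 2) : oddEvenPerm N = 1 := by
  ext i j
  have := i.isLt
  have := j.isLt
  simp only [oddEvenPerm, of_apply, one_apply, Fin.ext_iff]
  split_ifs <;> first | rfl | omega

lemma isPermutationMatrix_oddEvenPerm_two_pow (k : ℕ) :
    IsPermutationMatrix (oddEvenPerm (2 ^ k)) := by
  cases k with
  | zero =>
    rw [oddEvenPerm_eq_one (by norm_num)]
    exact .one
  | succ k =>
    exact isPermutationMatrix_iff.2 ⟨oddEvenEquiv (2 ^ k), (oddEvenPerm_eq_permMatrix _).symm⟩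

lemma kroneckerMap_one_W2_submatrix (M : ℕ) :
    (kroneckerMap (· * ·) (1 : Matrix (Fin M) (Fin M) ℂ) W2).submatrix
        (sumSelfEquivProdFinTwo _) (sumSelfEquivProdFinTwo _) =
      (1 / (Real.sqrt 2 : ℂ)) • fromBlocks 1 1 1 (-1) := by
  ext (i | i) (j | j) <;> simp [W2, one_apply]

lemma oddEvenPerm_mul_kronF_mul_transpose (M : ℕ) :
    oddEvenPerm (M * 2) * kronF (1 : Matrix (Fin M) (Fin M) ℂ) W2 * (oddEvenPerm (M * 2))ᵀ =
      castM (by omega)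
        ((1 / (Real.sqrt 2 : ℂ)) • fromBlocks2 (1 : Matrix (Fin M) (Fin M) ℂ) 1 1 (-1)) := by
  have hσ (i : Fin (M * 2)) : finProdFinEquiv.symm (oddEvenEquiv M i) =
      sumSelfEquivProdFinTwo _ (finSumFinEquiv.symm (Fin.cast (by omega) i)) := by
    simp [oddEvenEquiv]
  rw [oddEvenPerm_eq_permMatrix, transpose_permMatrix, PEquiv.toMatrix_toPEquiv_mul,
    PEquiv.mul_toMatrix_toPEquiv]
  ext i j
  simpa only [Equiv.Perm.inv_def, Equiv.symm_symm, kronF, fromBlocks2, reindex_apply, castM_apply,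
    submatrix_apply, id, hσ, Matrix.smul_apply, finCongr_symm, finCongr_apply] using
    congrFun₂ (kroneckerMap_one_W2_submatrix M)
    (finSumFinEquiv.symm (Fin.cast (show M * 2 = M + M by omega) i))
    (finSumFinEquiv.symm (Fin.cast (show M * 2 = M + M by omega) j))

end OddEven

section Layers

variable {L ℓ k : ℕ}

/-- The top-left blocks of `P_ℓ` and `D_ℓ` when `L - ℓ = k`; the rest of their diagonal is `1`.
-/
noncomputable def haarPCore (k : ℕ) : Matrix (Fin (2 ^ (k + 1))) (Fin (2 ^ (k + 1))) ℂ :=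
  castM (show 2 ^ k + 2 ^ k = 2 ^ (k + 1) by ring)
      (blockDiag2 (oddEvenPerm (2 ^ k))ᵀ (1 : Matrix (Fin (2 ^ k)) (Fin (2 ^ k)) ℂ)) *
    oddEvenPerm (2 ^ (k + 1))

noncomputable def haarDCore (k : ℕ) : Matrix (Fin (2 ^ (k + 1))) (Fin (2 ^ (k + 1))) ℂ :=
  kronF (1 : Matrix (Fin (2 ^ k)) (Fin (2 ^ k)) ℂ) W2

lemma haarP_zero (L : ℕ) : haarP L 0 = (oddEvenPerm (2 ^ L))ᵀ := rfl

lemma haarP_of_lt (h0 : ℓ ≠ 0) (h : ℓ < L) (hk : L - ℓ = k) :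
    haarP L ℓ = padOne (Nat.pow_le_pow_right two_pos (by omega : k + 1 ≤ L)) (haarPCore k) := by
  subst hk
  simp only [haarP, dif_neg h0, dif_pos h]
  rfl

lemma haarP_of_le (h0 : ℓ ≠ 0) (h : L ≤ ℓ) : haarP L ℓ = 1 := by
  simp only [haarP, dif_neg h0, dif_neg (not_lt.2 h)]

lemma haarD_of_le (h0 : ℓ ≠ 0) (h : ℓ ≤ L) (hk : L - ℓ = k) :
    haarD L ℓ = padOne (Nat.pow_le_pow_right two_pos (by omega : k + 1 ≤ L)) (haarDCore k) := by
  subst hk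
  simp only [haarD, dif_pos (⟨Nat.one_le_iff_ne_zero.2 h0, h⟩ : 1 ≤ ℓ ∧ ℓ ≤ L)]
  rfl

lemma haarP_succ_succ (h0 : ℓ ≠ 0) (h : ℓ ≤ L) :
    haarP (L + 1) (ℓ + 1) = padOne (Nat.pow_le_pow_right two_pos L.le_succ) (haarP L ℓ) := by
  rcases h.eq_or_lt with rfl | hlt
  · rw [haarP_of_le (by omega) le_rfl, haarP_of_le h0 le_rfl, map_one]
  · rw [haarP_of_lt (k := L - ℓ) (by omega) (by omega) (by omega), haarP_of_lt h0 hlt rfl,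
      padOne_padOne]

lemma haarD_succ_succ (h0 : ℓ ≠ 0) (h : ℓ ≤ L) :
    haarD (L + 1) (ℓ + 1) = padOne (Nat.pow_le_pow_right two_pos L.le_succ) (haarD L ℓ) := by
  rw [haarD_of_le (k := L - ℓ) (by omega) (by omega) (by omega), haarD_of_le h0 h rfl,
    padOne_padOne]

lemma haarP_succ_one (L : ℕ) : haarP (L + 1) 1 = haarPCore L := by
  cases L with
  | zero =>
    rw [haarP_of_le (L := 1) one_ne_zero le_rfl, haarPCore, oddEvenPerm_eq_one (by simp),
      oddEvenPerm_eq_one (by simp)]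
    simp
  | succ L => rw [haarP_of_lt (k := L + 1) one_ne_zero (by omega) (by omega), padOne_self]

lemma haarD_succ_one (L : ℕ) : haarD (L + 1) 1 = haarDCore L := by
  rw [haarD_of_le (k := L) one_ne_zero (by omega) (by omega), padOne_self]

lemma isPermutationMatrix_haarPCore (k : ℕ) : IsPermutationMatrix (haarPCore k) :=
  (((isPermutationMatrix_oddEvenPerm_two_pow k).transpose.blockDiag2 .one).castM _).mul
    (isPermutationMatrix_oddEvenPerm_two_pow (k + 1))

lemma isPermutationMatrix_haarP (L ℓ : ℕ) : IsPermutationMatrix (haarP L ℓ) := by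
  rcases eq_or_ne ℓ 0 with rfl | h0
  · exact (isPermutationMatrix_oddEvenPerm_two_pow L).transpose
  rcases lt_or_ge ℓ L with h | h
  · rw [haarP_of_lt h0 h rfl]
    exact (isPermutationMatrix_haarPCore _).padOne _
  · rw [haarP_of_le h0 h]
    exact .one

noncomputable def haarLayers (L : ℕ) : Matrix (Fin (2 ^ L)) (Fin (2 ^ L)) ℂ :=
  ((List.finRange L).reverse.map fun i : Fin L => haarP L (i.val + 1) * haarD L (i.val + 1)).prod

lemma haarLayers_succ (L : ℕ) :
    haarLayers (L + 1) =
      padOne (Nat.pow_le_pow_right two_pos L.le_succ) (haarLayers L) *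
        (haarPCore L * haarDCore L) := by
  rw [haarLayers, List.finRange_succ, List.reverse_cons, List.map_append, List.prod_append,
    ← List.map_reverse, List.map_map, haarLayers, map_list_prod, List.map_map]
  congr 1
  · refine congrArg List.prod (List.map_congr_left fun i _ => ?_)
    simp only [Function.comp_apply, Fin.val_succ]
    rw [haarP_succ_succ (by omega) i.isLt, haarD_succ_succ (by omega) i.isLt, map_mul]
  · simp [haarP_succ_one, haarD_succ_one]

lemma haarMat_succ_mul_oddEvenPerm (L : ℕ) :
    haarMat (L + 1) * oddEvenPerm (2 ^ (L + 1)) =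
      padOne (Nat.pow_le_pow_right two_pos L.le_succ) (haarMat L * oddEvenPerm (2 ^ L)) *
        (haarPCore L * haarDCore L) := by
  have e : 2 ^ L + 2 ^ L = 2 ^ (L + 1) := by ring
  set W := haarMat L
  set P := oddEvenPerm (2 ^ L)
  set Q := oddEvenPerm (2 ^ (L + 1))
  have hP := isPermutationMatrix_oddEvenPerm_two_pow L
  have hQ := isPermutationMatrix_oddEvenPerm_two_pow (L + 1)
  have hconj : Q * haarDCore L * Qᵀ =
      castM e ((1 / (Real.sqrt 2 : ℂ)) • fromBlocks2 (1 : Matrix (Fin (2 ^ L)) _ ℂ) 1 1 (-1)) :=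
    oddEvenPerm_mul_kronF_mul_transpose (2 ^ L)
  calc haarMat (L + 1) * Q
      = castM e (blockDiag2 W 1) * (Q * haarDCore L * Qᵀ) * Q := by
        rw [hconj, ← castM_mul, mul_smul_comm, ← fromBlocks2_self_one_neg_one]
        rfl
    _ = castM e (blockDiag2 W 1) * Q * haarDCore L := by
        rw [mul_assoc _ (Q * haarDCore L * Qᵀ), mul_assoc (Q * haarDCore L),
          hQ.transpose_mul_self, mul_one, mul_assoc]
    _ = castM e (blockDiag2 (W * P) 1) * castM e (blockDiag2 Pᵀ 1) * Q * haarDCore L := by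
        rw [← castM_mul, blockDiag2_mul, mul_assoc W, hP.mul_transpose_self, mul_one, mul_one]
    _ = _ := by
        rw [padOne_eq_castM_blockDiag2 _ e, haarPCore]
        simp only [mul_assoc]
        rfl

lemma haarMat_mul_oddEvenPerm (L : ℕ) : haarMat L * oddEvenPerm (2 ^ L) = haarLayers L := by
  induction L with
  | zero => simp [haarMat, haarLayers, oddEvenPerm_eq_one]
  | succ L ih => rw [haarMat_succ_mul_oddEvenPerm, ih, haarLayers_succ]

end Layers

theorem haar_layered_decomposition_general (L : ℕ) :
    haarMat L =
        ((List.finRange L).reverse.map fun i : Fin L =>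
            haarP L (i.val + 1) * haarD L (i.val + 1)).prod
          * haarP L 0
    ∧ ∀ ℓ ≤ L, IsPermutationMatrix (haarP L ℓ) := by
  refine ⟨?_, fun ℓ _ => isPermutationMatrix_haarP L ℓ⟩
  calc haarMat L = haarMat L * oddEvenPerm (2 ^ L) * (oddEvenPerm (2 ^ L))ᵀ := by
        rw [mul_assoc, (isPermutationMatrix_oddEvenPerm_two_pow L).mul_transpose_self, mul_one]
    _ = haarLayers L * haarP L 0 := by rw [haarMat_mul_oddEvenPerm, haarP_zero]

/-- **Full layered decomposition of the Haar matrix** (Proposition 5):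
`W_{2^L} = P_L·D_L·⋯·P_1·D_1·P_0`; moreover all `P_ℓ` are permutation matrices. -/
theorem haar_layered_decomposition (L : ℕ) (hL : 1 ≤ L) :
    haarMat L =
        ((List.finRange L).reverse.map fun i : Fin L =>
            haarP L (i.val + 1) * haarD L (i.val + 1)).prod
          * haarP L 0
    ∧ ∀ ℓ ≤ L, IsPermutationMatrix (haarP L ℓ) :=
  haar_layered_decomposition_general L
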